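/- arXiv:1201.0891 — 3 statements merged into one kernel-verified Lean document; each statement's English description precedes it below -/
import Mathlib

section
/- (Zero-One Law) For every positive semidefinite d×d matrix ρ with tr(ρ) = 1, the reachable termination probability satisfies h(ρ) = 0 or h(ρ) = 1. -/
/-!
Let `h = h(ρ)`. For a reachable state `σ` (trace one, support in `H_R(ρ)`) and a schedule `s`,
run `s` for `n` steps: with `p_n` the mass terminated so far, the remaining state has trace
`1 - p_n` and its support is still in `H_R(ρ)`, since `H_R(ρ)` is invariant under every Kraus
operator `E_{i,j} M₁`. Its normalisation is again reachable, so
`t_s(σ) ≥ p_n + h (1 - p_n)`, and letting `n → ∞` gives `h (1 - t_s(σ)) ≤ 0`.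
Hence if `h > 0`, every reachable state terminates with probability one under every schedule,
and `h = 1`.
-/

noncomputable section
open Matrix
open scoped ComplexOrder

variable {d m r : ℕ}

/-- One step of process `i`: `T_i(ρ) = E_i(M₁ ρ M₁†) = ∑_j (E_{i,j} M₁) ρ (E_{i,j} M₁)†`. -/
def Tstep (E : Fin m → Fin r → Matrix (Fin d) (Fin d) ℂ)
    (M1 : Matrix (Fin d) (Fin d) ℂ) (i : Fin m)
    (ρ : Matrix (Fin d) (Fin d) ℂ) : Matrix (Fin d) (Fin d) ℂ :=
  ∑ j, (E i j * M1) * ρ * (E i j * M1)ᴴ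

/-- `T_f` for a word `f = s₁⋯s_n`: apply `T_{s₁}` first, then `T_{s₂}`, …, `T_{s_n}`. -/
def Tword (E : Fin m → Fin r → Matrix (Fin d) (Fin d) ℂ)
    (M1 : Matrix (Fin d) (Fin d) ℂ) (f : List (Fin m))
    (ρ : Matrix (Fin d) (Fin d) ℂ) : Matrix (Fin d) (Fin d) ℂ :=
  f.foldl (fun σ k => Tstep E M1 k σ) ρ

/-- The support of a matrix: its column space, as a subspace of `ℂ^d`. -/
def supp (A : Matrix (Fin d) (Fin d) ℂ) : Submodule ℂ (Fin d → ℂ) :=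
  LinearMap.range (Matrix.toLin' A)

/-- Length-`n` prefix of a schedule. -/
def prefixn (s : ℕ → Fin m) (n : ℕ) : List (Fin m) :=
  List.ofFn (fun i : Fin n => s i)

/-- Termination probability within a word `f`. -/
def tWord (E : Fin m → Fin r → Matrix (Fin d) (Fin d) ℂ)
    (M0 M1 : Matrix (Fin d) (Fin d) ℂ) (f : List (Fin m))
    (ρ : Matrix (Fin d) (Fin d) ℂ) : ℝ :=
  ∑ n ∈ Finset.range (f.length + 1),
    (M0 * Tword E M1 (f.take n) ρ * M0ᴴ).trace.re

/-- Termination probability along a schedule `s`. -/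
def tSched (E : Fin m → Fin r → Matrix (Fin d) (Fin d) ℂ)
    (M0 M1 : Matrix (Fin d) (Fin d) ℂ) (s : ℕ → Fin m)
    (ρ : Matrix (Fin d) (Fin d) ℂ) : ℝ :=
  ∑' n : ℕ, (M0 * Tword E M1 (prefixn s n) ρ * M0ᴴ).trace.re

/-- Termination probability `t(ρ)`: infimum over all schedules. -/
def tInf (E : Fin m → Fin r → Matrix (Fin d) (Fin d) ℂ)
    (M0 M1 : Matrix (Fin d) (Fin d) ℂ)
    (ρ : Matrix (Fin d) (Fin d) ℂ) : ℝ :=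
  ⨅ s : ℕ → Fin m, tSched E M0 M1 s ρ

/-- The reachable space `H_{R(ρ)}`. -/
def HR (E : Fin m → Fin r → Matrix (Fin d) (Fin d) ℂ)
    (M1 : Matrix (Fin d) (Fin d) ℂ)
    (ρ : Matrix (Fin d) (Fin d) ℂ) : Submodule ℂ (Fin d → ℂ) :=
  ⨆ f : List (Fin m), supp (Tword E M1 f ρ)

/-- The average super-operator `T = (1/m) ∑ T_i`. -/
def Tavg (E : Fin m → Fin r → Matrix (Fin d) (Fin d) ℂ)
    (M1 : Matrix (Fin d) (Fin d) ℂ)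
    (ρ : Matrix (Fin d) (Fin d) ℂ) : Matrix (Fin d) (Fin d) ℂ :=
  ((m : ℂ)⁻¹) • ∑ i : Fin m, Tstep E M1 i ρ

/-- `H_{R̄_n(ρ)} = ⋁_{k=0}^n supp(T^k(ρ))`. -/
def HRbar (E : Fin m → Fin r → Matrix (Fin d) (Fin d) ℂ)
    (M1 : Matrix (Fin d) (Fin d) ℂ)
    (ρ : Matrix (Fin d) (Fin d) ℂ) (n : ℕ) : Submodule ℂ (Fin d → ℂ) :=
  ⨆ k : Fin (n + 1), supp ((Tavg E M1)^[k] ρ)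

/-- Reachable termination probability `h(ρ)`. -/
def hProb (E : Fin m → Fin r → Matrix (Fin d) (Fin d) ℂ)
    (M0 M1 : Matrix (Fin d) (Fin d) ℂ)
    (ρ : Matrix (Fin d) (Fin d) ℂ) : ℝ :=
  sInf { x : ℝ | ∃ σ : Matrix (Fin d) (Fin d) ℂ,
    σ.PosSemidef ∧ σ.trace = 1 ∧ supp σ ≤ HR E M1 ρ ∧ x = tInf E M0 M1 σ }

/-- `PD_f`: pure states diverging within the word `f`. -/
def PDword (E : Fin m → Fin r → Matrix (Fin d) (Fin d) ℂ)
    (M0 M1 : Matrix (Fin d) (Fin d) ℂ) (f : List (Fin m)) : Set (Fin d → ℂ) :=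
  { x : Fin d → ℂ | tWord E M0 M1 f (Matrix.vecMulVec x (star x)) = 0 }

/-- `PD_n`: union of `PD_f` over words of length `n`. -/
def PDn (E : Fin m → Fin r → Matrix (Fin d) (Fin d) ℂ)
    (M0 M1 : Matrix (Fin d) (Fin d) ℂ) (n : ℕ) : Set (Fin d → ℂ) :=
  { x : Fin d → ℂ | ∃ f : List (Fin m), f.length = n ∧ x ∈ PDword E M0 M1 f }

/-- `PD`: the diverging pure states. -/
def PD (E : Fin m → Fin r → Matrix (Fin d) (Fin d) ℂ)
    (M0 M1 : Matrix (Fin d) (Fin d) ℂ) : Set (Fin d → ℂ) :=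
  { x : Fin d → ℂ | ∃ s : ℕ → Fin m, tSched E M0 M1 s (Matrix.vecMulVec x (star x)) = 0 }

section Range

open LinearMap

variable {𝕜 ι n p : Type*} [RCLike 𝕜] [Fintype n] [Fintype p]

theorem Matrix.range_mulVecLin_conjTranspose_mul_self (A : Matrix p n 𝕜) :
    range (Aᴴ * A).mulVecLin = range Aᴴ.mulVecLin := by
  refine Submodule.eq_of_le_of_finrank_le ?_ ?_
  · rw [mulVecLin_mul]
    exact range_comp_le_range _ _
  · change Aᴴ.rank ≤ (Aᴴ * A).rank
    rw [rank_conjTranspose_mul_self, rank_conjTranspose]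

open scoped MatrixOrder in
theorem Matrix.PosSemidef.range_mulVecLin_mul_mul_conjTranspose {σ : Matrix n n 𝕜}
    (hσ : σ.PosSemidef) (K : Matrix p n 𝕜) :
    range (K * σ * Kᴴ).mulVecLin = (range σ.mulVecLin).map K.mulVecLin := by
  classical
  obtain ⟨B, rfl⟩ := CStarAlgebra.nonneg_iff_eq_star_mul_self.mp hσ.nonneg
  rw [star_eq_conjTranspose, range_mulVecLin_conjTranspose_mul_self,
    show K * (Bᴴ * B) * Kᴴ = (B * Kᴴ)ᴴ * (B * Kᴴ) by simp [conjTranspose_mul, Matrix.mul_assoc],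
    range_mulVecLin_conjTranspose_mul_self, conjTranspose_mul, conjTranspose_conjTranspose,
    mulVecLin_mul, range_comp]

open scoped MatrixOrder in
theorem Matrix.PosSemidef.range_mulVecLin_le_add {P Q : Matrix n n 𝕜} (hP : P.PosSemidef)
    (hQ : Q.PosSemidef) : range P.mulVecLin ≤ range (P + Q).mulVecLin := by
  classical
  obtain ⟨B, rfl⟩ := CStarAlgebra.nonneg_iff_eq_star_mul_self.mp hP.nonneg
  obtain ⟨C, rfl⟩ := CStarAlgebra.nonneg_iff_eq_star_mul_self.mp hQ.nonneg
  -- `P + Q = Dᴴ D` for `D` the stack of `B` over `C`, and `range Dᴴ = range Bᴴ ⊔ range Cᴴ`.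
  have hsum : star B * B + star C * C = (fromRows B C)ᴴ * fromRows B C := by
    rw [conjTranspose_fromRows_eq_fromCols_conjTranspose, fromCols_mul_fromRows]
    rfl
  rw [hsum, range_mulVecLin_conjTranspose_mul_self, star_eq_conjTranspose,
    range_mulVecLin_conjTranspose_mul_self, conjTranspose_fromRows_eq_fromCols_conjTranspose]
  rintro _ ⟨x, rfl⟩
  exact ⟨Sum.elim x 0, by simp⟩

theorem Matrix.PosSemidef.range_mulVecLin_sum_mul_mul_conjTranspose [Fintype ι]
    {σ : Matrix n n 𝕜} (hσ : σ.PosSemidef) (K : ι → Matrix n n 𝕜) :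
    range (∑ i, K i * σ * (K i)ᴴ).mulVecLin = ⨆ i, (range σ.mulVecLin).map (K i).mulVecLin := by
  classical
  simp_rw [← hσ.range_mulVecLin_mul_mul_conjTranspose]
  refine le_antisymm ?_ (iSup_le fun i => ?_)
  · rintro _ ⟨x, rfl⟩
    rw [mulVecLin_apply, sum_mulVec]
    exact Submodule.sum_mem _ fun i _ => Submodule.mem_iSup_of_mem i ⟨x, rfl⟩
  · rw [← Finset.add_sum_erase _ _ (Finset.mem_univ i)]
    exact (hσ.mul_mul_conjTranspose_same _).range_mulVecLin_le_add
      (posSemidef_sum _ fun j _ => hσ.mul_mul_conjTranspose_same _)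

end Range

theorem Matrix.PosSemidef.trace_re_nonneg {n : Type*} [Fintype n] {A : Matrix n n ℂ}
    (hA : A.PosSemidef) : 0 ≤ A.trace.re :=
  (Complex.nonneg_iff.mp hA.trace_nonneg).1

theorem Real.sInf_eq_zero_or_eq_of_subset_singleton {S : Set ℝ} {a : ℝ} (h : S ⊆ {a}) :
    sInf S = 0 ∨ sInf S = a := by
  obtain rfl | rfl := Set.subset_singleton_iff_eq.mp h
  · exact Or.inl Real.sInf_empty
  · exact Or.inr (csInf_singleton a)

section Dynamics

variable (E : Fin m → Fin r → Matrix (Fin d) (Fin d) ℂ) (M0 M1 : Matrix (Fin d) (Fin d) ℂ)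

theorem Tstep_posSemidef (i : Fin m) {σ : Matrix (Fin d) (Fin d) ℂ} (hσ : σ.PosSemidef) :
    (Tstep E M1 i σ).PosSemidef :=
  posSemidef_sum _ fun _ _ => hσ.mul_mul_conjTranspose_same _

theorem Tword_posSemidef (f : List (Fin m)) {σ : Matrix (Fin d) (Fin d) ℂ}
    (hσ : σ.PosSemidef) : (Tword E M1 f σ).PosSemidef := by
  induction f generalizing σ with
  | nil => exact hσ
  | cons i f ih => exact ih (Tstep_posSemidef E M1 i hσ)

theorem Tword_append (f g : List (Fin m)) (σ : Matrix (Fin d) (Fin d) ℂ) :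
    Tword E M1 (f ++ g) σ = Tword E M1 g (Tword E M1 f σ) :=
  List.foldl_append

theorem Tword_singleton (i : Fin m) (σ : Matrix (Fin d) (Fin d) ℂ) :
    Tword E M1 [i] σ = Tstep E M1 i σ :=
  rfl

theorem Tword_smul (f : List (Fin m)) (c : ℝ) (σ : Matrix (Fin d) (Fin d) ℂ) :
    Tword E M1 f (c • σ) = c • Tword E M1 f σ := by
  induction f generalizing σ with
  | nil => rfl
  | cons i f ih =>
    have hstep : Tstep E M1 i (c • σ) = c • Tstep E M1 i σ := by
      simp only [Tstep, Matrix.mul_smul, Matrix.smul_mul, Finset.smul_sum]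
    exact (congrArg (Tword E M1 f) hstep).trans (ih _)

theorem trace_Tstep (hE : ∀ i, ∑ j, (E i j)ᴴ * E i j = 1) (hM : M0ᴴ * M0 + M1ᴴ * M1 = 1)
    (i : Fin m) (σ : Matrix (Fin d) (Fin d) ℂ) :
    (Tstep E M1 i σ).trace = σ.trace - (M0 * σ * M0ᴴ).trace := by
  have hK : ∑ j, (E i j * M1)ᴴ * (E i j * M1) = 1 - M0ᴴ * M0 := by
    simp_rw [conjTranspose_mul, Matrix.mul_assoc, ← Matrix.mul_assoc (E i _)ᴴ,
      ← Finset.mul_sum, ← Finset.sum_mul, hE i, Matrix.one_mul, ← hM, add_sub_cancel_left]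
  calc (Tstep E M1 i σ).trace = ((∑ j, (E i j * M1)ᴴ * (E i j * M1)) * σ).trace := by
        rw [Tstep, trace_sum, Finset.sum_mul, trace_sum]
        exact Finset.sum_congr rfl fun j _ => trace_mul_cycle _ _ _
    _ = σ.trace - (M0 * σ * M0ᴴ).trace := by
        rw [hK, Matrix.sub_mul, Matrix.one_mul, trace_sub, Matrix.mul_assoc,
          trace_mul_comm M0ᴴ]

end Dynamics

section Schedule

open Filter Topology

variable (E : Fin m → Fin r → Matrix (Fin d) (Fin d) ℂ) (M0 M1 : Matrix (Fin d) (Fin d) ℂ)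

theorem prefixn_add (s : ℕ → Fin m) (n k : ℕ) :
    prefixn s (n + k) = prefixn s n ++ prefixn (fun j => s (n + j)) k := by
  simp [prefixn, List.ofFn_add]

theorem Tword_prefixn_succ (s : ℕ → Fin m) (n : ℕ) (σ : Matrix (Fin d) (Fin d) ℂ) :
    Tword E M1 (prefixn s (n + 1)) σ = Tstep E M1 (s n) (Tword E M1 (prefixn s n) σ) := by
  rw [prefixn_add, Tword_append]
  rfl

theorem sum_range_tSched_terms (hE : ∀ i, ∑ j, (E i j)ᴴ * E i j = 1)
    (hM : M0ᴴ * M0 + M1ᴴ * M1 = 1) (s : ℕ → Fin m) (σ : Matrix (Fin d) (Fin d) ℂ) (n : ℕ) :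
    ∑ k ∈ Finset.range n, (M0 * Tword E M1 (prefixn s k) σ * M0ᴴ).trace.re
      = σ.trace.re - (Tword E M1 (prefixn s n) σ).trace.re := by
  induction n with
  | zero => simp [prefixn, Tword]
  | succ n ih =>
    rw [Finset.sum_range_succ, ih, Tword_prefixn_succ, trace_Tstep E M0 M1 hE hM,
      Complex.sub_re]
    ring

theorem summable_tSched_terms (hE : ∀ i, ∑ j, (E i j)ᴴ * E i j = 1)
    (hM : M0ᴴ * M0 + M1ᴴ * M1 = 1) (s : ℕ → Fin m) {σ : Matrix (Fin d) (Fin d) ℂ}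
    (hσ : σ.PosSemidef) :
    Summable fun n => (M0 * Tword E M1 (prefixn s n) σ * M0ᴴ).trace.re := by
  refine summable_of_sum_range_le (c := σ.trace.re)
    (fun n => ((Tword_posSemidef E M1 _ hσ).mul_mul_conjTranspose_same M0).trace_re_nonneg)
    fun n => ?_
  rw [sum_range_tSched_terms E M0 M1 hE hM]
  linarith [(Tword_posSemidef E M1 (prefixn s n) hσ).trace_re_nonneg]

theorem tSched_nonneg (s : ℕ → Fin m) {σ : Matrix (Fin d) (Fin d) ℂ} (hσ : σ.PosSemidef) :
    0 ≤ tSched E M0 M1 s σ :=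
  tsum_nonneg fun _ => ((Tword_posSemidef E M1 _ hσ).mul_mul_conjTranspose_same M0).trace_re_nonneg

theorem tendsto_trace_re_Tword_prefixn (hE : ∀ i, ∑ j, (E i j)ᴴ * E i j = 1)
    (hM : M0ᴴ * M0 + M1ᴴ * M1 = 1) (s : ℕ → Fin m) {σ : Matrix (Fin d) (Fin d) ℂ}
    (hσ : σ.PosSemidef) :
    Tendsto (fun n => (Tword E M1 (prefixn s n) σ).trace.re) atTop
      (𝓝 (σ.trace.re - tSched E M0 M1 s σ)) := by
  have hsum := (summable_tSched_terms E M0 M1 hE hM s hσ).hasSum.tendsto_sum_nat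
  simp_rw [sum_range_tSched_terms E M0 M1 hE hM] at hsum
  simpa [tSched] using hsum.const_sub σ.trace.re

theorem tSched_le_trace_re (hE : ∀ i, ∑ j, (E i j)ᴴ * E i j = 1)
    (hM : M0ᴴ * M0 + M1ᴴ * M1 = 1) (s : ℕ → Fin m) {σ : Matrix (Fin d) (Fin d) ℂ}
    (hσ : σ.PosSemidef) : tSched E M0 M1 s σ ≤ σ.trace.re := by
  have hlim := tendsto_trace_re_Tword_prefixn E M0 M1 hE hM s hσ
  have := ge_of_tendsto' hlim fun n => (Tword_posSemidef E M1 (prefixn s n) hσ).trace_re_nonneg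
  linarith

theorem tSched_eq_add_tSched_shift (hE : ∀ i, ∑ j, (E i j)ᴴ * E i j = 1)
    (hM : M0ᴴ * M0 + M1ᴴ * M1 = 1) (s : ℕ → Fin m) {σ : Matrix (Fin d) (Fin d) ℂ}
    (hσ : σ.PosSemidef) (n : ℕ) :
    tSched E M0 M1 s σ = (σ.trace.re - (Tword E M1 (prefixn s n) σ).trace.re)
      + tSched E M0 M1 (fun j => s (n + j)) (Tword E M1 (prefixn s n) σ) := by
  rw [tSched, ← (summable_tSched_terms E M0 M1 hE hM s hσ).sum_add_tsum_nat_add n,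
    sum_range_tSched_terms E M0 M1 hE hM, tSched]
  simp_rw [add_comm _ n, prefixn_add, Tword_append]

theorem tSched_smul (s : ℕ → Fin m) (c : ℝ) (σ : Matrix (Fin d) (Fin d) ℂ) :
    tSched E M0 M1 s (c • σ) = c * tSched E M0 M1 s σ := by
  simp_rw [tSched, Tword_smul, Matrix.mul_smul, Matrix.smul_mul, trace_smul, Complex.smul_re,
    smul_eq_mul, tsum_mul_left]

end Schedule

section Reachable

variable (E : Fin m → Fin r → Matrix (Fin d) (Fin d) ℂ) (M1 : Matrix (Fin d) (Fin d) ℂ)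

theorem supp_Tstep (i : Fin m) {σ : Matrix (Fin d) (Fin d) ℂ} (hσ : σ.PosSemidef) :
    supp (Tstep E M1 i σ) = ⨆ j, (supp σ).map (E i j * M1).mulVecLin :=
  hσ.range_mulVecLin_sum_mul_mul_conjTranspose _

theorem map_HR_le {ρ : Matrix (Fin d) (Fin d) ℂ} (hρ : ρ.PosSemidef) (i : Fin m) (j : Fin r) :
    (HR E M1 ρ).map (E i j * M1).mulVecLin ≤ HR E M1 ρ := by
  rw [HR, Submodule.map_iSup]
  refine iSup_mono' fun f => ⟨f ++ [i], ?_⟩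
  rw [Tword_append, Tword_singleton, supp_Tstep E M1 i (Tword_posSemidef E M1 f hρ)]
  exact le_iSup (fun j => (supp (Tword E M1 f ρ)).map (E i j * M1).mulVecLin) j

theorem supp_Tword_le_HR {ρ : Matrix (Fin d) (Fin d) ℂ} (hρ : ρ.PosSemidef) (f : List (Fin m))
    {σ : Matrix (Fin d) (Fin d) ℂ} (hσ : σ.PosSemidef) (hσρ : supp σ ≤ HR E M1 ρ) :
    supp (Tword E M1 f σ) ≤ HR E M1 ρ := by
  induction f generalizing σ with
  | nil => exact hσρ
  | cons i f ih =>
    refine ih (Tstep_posSemidef E M1 i hσ) ?_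
    rw [supp_Tstep E M1 i hσ]
    exact iSup_le fun j => (Submodule.map_mono hσρ).trans (map_HR_le E M1 hρ i j)

end Reachable

section ZeroOne

open Filter Topology

variable (E : Fin m → Fin r → Matrix (Fin d) (Fin d) ℂ) (M0 M1 : Matrix (Fin d) (Fin d) ℂ)

theorem tInf_nonneg {σ : Matrix (Fin d) (Fin d) ℂ} (hσ : σ.PosSemidef) : 0 ≤ tInf E M0 M1 σ :=
  Real.iInf_nonneg fun s => tSched_nonneg E M0 M1 s hσ

theorem hProb_nonneg (ρ : Matrix (Fin d) (Fin d) ℂ) : 0 ≤ hProb E M0 M1 ρ :=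
  Real.sInf_nonneg <| by
    rintro _ ⟨σ, hσ, -, -, rfl⟩
    exact tInf_nonneg E M0 M1 hσ

theorem hProb_le_tSched {ρ σ : Matrix (Fin d) (Fin d) ℂ} (hσ : σ.PosSemidef) (htr : σ.trace = 1)
    (hσρ : supp σ ≤ HR E M1 ρ) (s : ℕ → Fin m) : hProb E M0 M1 ρ ≤ tSched E M0 M1 s σ := by
  have hS : BddBelow {x | ∃ σ : Matrix (Fin d) (Fin d) ℂ,
      σ.PosSemidef ∧ σ.trace = 1 ∧ supp σ ≤ HR E M1 ρ ∧ x = tInf E M0 M1 σ} := by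
    refine ⟨0, ?_⟩
    rintro _ ⟨σ', hσ', -, -, rfl⟩
    exact tInf_nonneg E M0 M1 hσ'
  have hT : BddBelow (Set.range fun s => tSched E M0 M1 s σ) := by
    refine ⟨0, ?_⟩
    rintro _ ⟨s, rfl⟩
    exact tSched_nonneg E M0 M1 s hσ
  exact (csInf_le hS ⟨σ, hσ, htr, hσρ, rfl⟩).trans (ciInf_le hT s)

theorem hProb_mul_trace_re_le_tSched {ρ σ : Matrix (Fin d) (Fin d) ℂ} (hσ : σ.PosSemidef)
    (hσρ : supp σ ≤ HR E M1 ρ) (s : ℕ → Fin m) :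
    hProb E M0 M1 ρ * σ.trace.re ≤ tSched E M0 M1 s σ := by
  rcases hσ.trace_re_nonneg.eq_or_lt with hzero | hpos
  · rw [← hzero, mul_zero]
    exact tSched_nonneg E M0 M1 s hσ
  set c := σ.trace.re
  have hnorm_psd : (c⁻¹ • σ).PosSemidef := hσ.smul (inv_nonneg.mpr hpos.le)
  have hnorm_tr : (c⁻¹ • σ).trace = 1 := by
    have him : σ.trace.im = 0 := (Complex.nonneg_iff.mp hσ.trace_nonneg).2.symm
    rw [trace_smul]
    apply Complex.ext <;> simp [him, c, hpos.ne']
  have hnorm_supp : supp (c⁻¹ • σ) ≤ HR E M1 ρ := by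
    rintro _ ⟨x, rfl⟩
    exact hσρ ⟨c⁻¹ • x, by simp [Matrix.smul_mulVec]⟩
  have := hProb_le_tSched E M0 M1 hnorm_psd hnorm_tr hnorm_supp s
  rwa [tSched_smul, le_inv_mul_iff₀ hpos, mul_comm] at this

theorem hProb_mul_sub_tSched_nonpos (hE : ∀ i, ∑ j, (E i j)ᴴ * E i j = 1)
    (hM : M0ᴴ * M0 + M1ᴴ * M1 = 1) {ρ σ : Matrix (Fin d) (Fin d) ℂ} (hρ : ρ.PosSemidef)
    (hσ : σ.PosSemidef) (hσρ : supp σ ≤ HR E M1 ρ) (s : ℕ → Fin m) :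
    hProb E M0 M1 ρ * (σ.trace.re - tSched E M0 M1 s σ) ≤ 0 := by
  have hbound : ∀ n, σ.trace.re - (Tword E M1 (prefixn s n) σ).trace.re
      + hProb E M0 M1 ρ * (Tword E M1 (prefixn s n) σ).trace.re ≤ tSched E M0 M1 s σ := by
    intro n
    rw [tSched_eq_add_tSched_shift E M0 M1 hE hM s hσ n]
    gcongr
    exact hProb_mul_trace_re_le_tSched E M0 M1 (Tword_posSemidef E M1 _ hσ)
      (supp_Tword_le_HR E M1 hρ _ hσ hσρ) _
  have hlim := tendsto_trace_re_Tword_prefixn E M0 M1 hE hM s hσ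
  have := le_of_tendsto' ((tendsto_const_nhds.sub hlim).add (hlim.const_mul _)) hbound
  linarith

theorem tInf_eq_one_of_hProb_pos (hm : 0 < m) (hE : ∀ i, ∑ j, (E i j)ᴴ * E i j = 1)
    (hM : M0ᴴ * M0 + M1ᴴ * M1 = 1) {ρ σ : Matrix (Fin d) (Fin d) ℂ} (hρ : ρ.PosSemidef)
    (hpos : 0 < hProb E M0 M1 ρ) (hσ : σ.PosSemidef) (htr : σ.trace = 1)
    (hσρ : supp σ ≤ HR E M1 ρ) : tInf E M0 M1 σ = 1 := by
  have : Nonempty (Fin m) := Fin.pos_iff_nonempty.mp hm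
  have hone : ∀ s, tSched E M0 M1 s σ = 1 := by
    intro s
    have hle := tSched_le_trace_re E M0 M1 hE hM s hσ
    have hnonpos := hProb_mul_sub_tSched_nonpos E M0 M1 hE hM hρ hσ hσρ s
    rw [htr, Complex.one_re] at hle hnonpos
    nlinarith
  simp only [tInf, hone, ciInf_const]

end ZeroOne

theorem zero_one_law_general (d m r : ℕ) (hm : 0 < m)
    (E : Fin m → Fin r → Matrix (Fin d) (Fin d) ℂ)
    (hE : ∀ i, ∑ j, (E i j)ᴴ * E i j = 1)
    (M0 M1 : Matrix (Fin d) (Fin d) ℂ)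
    (hM : M0ᴴ * M0 + M1ᴴ * M1 = 1)
    (ρ : Matrix (Fin d) (Fin d) ℂ) (hρ : ρ.PosSemidef) :
    hProb E M0 M1 ρ = 0 ∨ hProb E M0 M1 ρ = 1 := by
  rcases (hProb_nonneg E M0 M1 ρ).eq_or_lt with hzero | hpos
  · exact Or.inl hzero.symm
  -- With no admissible state at all (`HR E M1 ρ = ⊥`), `hProb` is `sInf ∅ = 0`.
  refine Real.sInf_eq_zero_or_eq_of_subset_singleton ?_
  rintro _ ⟨σ, hσ, htr, hσρ, rfl⟩
  exact tInf_eq_one_of_hProb_pos E M0 M1 hm hE hM hρ hpos hσ htr hσρ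

/-- Zero-One Law: `h(ρ) = 0` or `h(ρ) = 1`. -/
theorem zero_one_law (d m r : ℕ) (hd : 0 < d) (hm : 0 < m)
    (E : Fin m → Fin r → Matrix (Fin d) (Fin d) ℂ)
    (hE : ∀ i, ∑ j, (E i j)ᴴ * E i j = 1)
    (M0 M1 : Matrix (Fin d) (Fin d) ℂ)
    (hM : M0ᴴ * M0 + M1ᴴ * M1 = 1)
    (ρ : Matrix (Fin d) (Fin d) ℂ) (hρ : ρ.PosSemidef) (htr : ρ.trace = 1) :
    hProb E M0 M1 ρ = 0 ∨ hProb E M0 M1 ρ = 1 :=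
  zero_one_law_general d m r hm E hE M0 M1 hM ρ hρ
end
end

section
/- Let ε(ρ) = ∑_j F_j ρ F_j† be a super-operator on d×d complex matrices, given by finitely many Kraus matrices F_j with ∑_j F_j† F_j = I. Then for every positive semidefinite d×d matrix ρ, supp(ε(ρ)) = ⋁_j F_j(supp(ρ)), the join of the images of supp(ρ) under the linear maps F_j. (Equivalently, the image of the support equals the support of the image: ε(supp ρ) = supp ε(ρ).) -/
noncomputable section
open Matrix
open scoped ComplexOrder

variable {d m r : ℕ}

/-!
Write `ρ = Bᴴ B`, so that the `j`-th term is `(F j Bᴴ)(F j Bᴴ)ᴴ` and `supp ρ = range Bᴴ`.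
A sum `∑ A j (A j)ᴴ` is `C Cᴴ` for the matrix `C` whose columns are those of all the `A j`,
and `range (C Cᴴ) = range C` because both have the same rank; so the support of the sum is
spanned by the columns of the `F j Bᴴ`, i.e. it is `⨆ j, F j (range Bᴴ)`.
-/

namespace Matrix

variable {ι l n R : Type*}

def catCols (A : ι → Matrix l n R) : Matrix l (ι × n) R :=
  of fun i p => A p.1 i p.2

theorem catCols_mul_conjTranspose [Fintype ι] [Fintype n] [Semiring R] [StarRing R]
    (A : ι → Matrix l n R) : catCols A * (catCols A)ᴴ = ∑ j, A j * (A j)ᴴ := by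
  ext i k
  simp [catCols, mul_apply, sum_apply, Fintype.sum_prod_type]

theorem range_mulVecLin_catCols [Fintype ι] [Fintype n] [CommSemiring R]
    (A : ι → Matrix l n R) :
    LinearMap.range (catCols A).mulVecLin = ⨆ j, LinearMap.range (A j).mulVecLin := by
  have hcols : Set.range (catCols A).col = ⋃ j, Set.range (A j).col := by
    ext v
    simp only [Set.mem_range, Set.mem_iUnion, Prod.exists]
    rfl
  simp only [range_mulVecLin, hcols, Submodule.span_iUnion]

variable [Fintype l] [Fintype n] [Field R] [PartialOrder R] [StarRing R] [StarOrderedRing R]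

theorem range_mulVecLin_mul_conjTranspose (A : Matrix l n R) :
    LinearMap.range (A * Aᴴ).mulVecLin = LinearMap.range A.mulVecLin := by
  have hle : LinearMap.range (A * Aᴴ).mulVecLin ≤ LinearMap.range A.mulVecLin := by
    rw [mulVecLin_mul, LinearMap.range_comp]
    exact LinearMap.map_le_range
  exact Submodule.eq_of_le_of_finrank_le hle (rank_self_mul_conjTranspose A).ge

theorem range_mulVecLin_sum_mul_conjTranspose [Fintype ι] (A : ι → Matrix l n R) :
    LinearMap.range (∑ j, A j * (A j)ᴴ).mulVecLin = ⨆ j, LinearMap.range (A j).mulVecLin := by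
  rw [← catCols_mul_conjTranspose, range_mulVecLin_mul_conjTranspose, range_mulVecLin_catCols]

end Matrix

theorem supp_superoperator_general (d r : ℕ)
    (F : Fin r → Matrix (Fin d) (Fin d) ℂ)
    (ρ : Matrix (Fin d) (Fin d) ℂ) (hρ : ρ.PosSemidef) :
    supp (∑ j, F j * ρ * (F j)ᴴ) =
      ⨆ j : Fin r, Submodule.map (Matrix.toLin' (F j)) (supp ρ) := by
  open scoped MatrixOrder in
  obtain ⟨B, rfl⟩ := CStarAlgebra.nonneg_iff_eq_star_mul_self.mp hρ.nonneg
  rw [star_eq_conjTranspose]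
  have hsupp : supp (Bᴴ * B) = LinearMap.range Bᴴ.mulVecLin := by
    rw [supp, toLin'_apply', ← range_mulVecLin_mul_conjTranspose Bᴴ, conjTranspose_conjTranspose]
  have hterm : ∀ j, F j * (Bᴴ * B) * (F j)ᴴ = (F j * Bᴴ) * (F j * Bᴴ)ᴴ := fun j => by
    simp only [conjTranspose_mul, conjTranspose_conjTranspose, Matrix.mul_assoc]
  calc supp (∑ j, F j * (Bᴴ * B) * (F j)ᴴ)
      = LinearMap.range (∑ j, (F j * Bᴴ) * (F j * Bᴴ)ᴴ).mulVecLin := by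
        simp only [supp, toLin'_apply', hterm]
    _ = ⨆ j, LinearMap.range (F j * Bᴴ).mulVecLin := range_mulVecLin_sum_mul_conjTranspose _
    _ = ⨆ j, Submodule.map (toLin' (F j)) (supp (Bᴴ * B)) := by
        simp only [hsupp, toLin'_apply', mulVecLin_mul, LinearMap.range_comp]

/-- the support of the image of a PSD matrix under a super-operator is the
join of the images of the support under the Kraus operators. -/
theorem supp_superoperator (d r : ℕ) (hd : 0 < d)
    (F : Fin r → Matrix (Fin d) (Fin d) ℂ)
    (hF : ∑ j, (F j)ᴴ * F j = 1)
    (ρ : Matrix (Fin d) (Fin d) ℂ) (hρ : ρ.PosSemidef) :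
    supp (∑ j, F j * ρ * (F j)ᴴ) =
      ⨆ j : Fin r, Submodule.map (Matrix.toLin' (F j)) (supp ρ) :=
  supp_superoperator_general d r F ρ hρ
end
end

section
/- Let ε(ρ) = ∑_j F_j ρ F_j† be a super-operator on d×d complex matrices, given by finitely many Kraus matrices F_j with ∑_j F_j† F_j = I, and let X be a linear subspace of ℂ^d. Define the pre-image ε^{-1}(X) = {x ∈ ℂ^d : supp(ε(x x†)) ⊆ X}. Then ε^{-1}(X) = (⋁_j F_j†(X^⊥))^⊥, where ⊥ denotes the orthogonal complement with respect to the standard Hermitian inner product on ℂ^d and F_j†(X^⊥) is the image of X^⊥ under the conjugate-transpose matrix F_j†. -/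
/-!
Writing `u j = F j x`, the matrix `ε(x x†) = ∑ j, u j (u j)†` is the positive operator
`∑ j, |u j⟩⟨u j|`, whose kernel is the orthogonal complement of the `u j` and whose range is
therefore their span. So `supp ε(x x†) ⊆ X` iff every `F j x` lies in `X`, i.e. iff `x` is
orthogonal to `(F j)† y` for all `y ∈ Xᗮ` and all `j`.
-/

open Matrix InnerProductSpace Submodule

section InnerProductSpace

variable {𝕜 E : Type*} [RCLike 𝕜] [NormedAddCommGroup E] [InnerProductSpace 𝕜 E]

theorem Submodule.mem_orthogonal_span_range_iff {ι : Type*} {u : ι → E} {z : E} :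
    z ∈ (span 𝕜 (Set.range u))ᗮ ↔ ∀ j, inner 𝕜 (u j) z = 0 := by
  simp only [span_range_eq_iSup, ← iInf_orthogonal, mem_iInf,
    mem_orthogonal_singleton_iff_inner_right]

theorem inner_sum_rankOne_self_apply {ι : Type*} [Fintype ι] (u : ι → E) (z : E) :
    inner 𝕜 ((∑ j, rankOne 𝕜 (u j) (u j)) z) z = ((∑ j, ‖inner 𝕜 (u j) z‖ ^ 2 : ℝ) : 𝕜) := by
  simp only [_root_.sum_apply, rankOne_apply, sum_inner, inner_smul_left, RCLike.conj_mul]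
  push_cast
  rfl

theorem ker_sum_rankOne_self {ι : Type*} [Fintype ι] (u : ι → E) :
    LinearMap.ker ((∑ j, rankOne 𝕜 (u j) (u j) : E →L[𝕜] E) : E →ₗ[𝕜] E) =
      (span 𝕜 (Set.range u))ᗮ := by
  ext z
  rw [mem_orthogonal_span_range_iff, LinearMap.mem_ker, ContinuousLinearMap.coe_coe]
  constructor
  · intro hz j
    have hsum : ∑ j, ‖inner 𝕜 (u j) z‖ ^ 2 = 0 := by
      have h := inner_sum_rankOne_self_apply (𝕜 := 𝕜) u z
      rw [hz, inner_zero_left] at h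
      exact_mod_cast h.symm
    simpa using (Finset.sum_eq_zero_iff_of_nonneg fun j _ => sq_nonneg _).mp hsum j
      (Finset.mem_univ j)
  · intro hz
    simp [hz]

theorem range_sum_rankOne_self [FiniteDimensional 𝕜 E] {ι : Type*} [Fintype ι] (u : ι → E) :
    LinearMap.range ((∑ j, rankOne 𝕜 (u j) (u j) : E →L[𝕜] E) : E →ₗ[𝕜] E) =
      span 𝕜 (Set.range u) := by
  have hT : (∑ j, rankOne 𝕜 (u j) (u j)).IsSymmetric :=
    (ContinuousLinearMap.isPositive_sum _ fun j _ => isPositive_rankOne_self (u j)).isSymmetric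
  rw [← (LinearMap.range _).orthogonal_orthogonal, hT.orthogonal_range, ker_sum_rankOne_self,
    orthogonal_orthogonal]

theorem Submodule.orthogonal_map_adjoint {F : Type*} [NormedAddCommGroup F]
    [InnerProductSpace 𝕜 F] [FiniteDimensional 𝕜 E] [FiniteDimensional 𝕜 F]
    (T : E →ₗ[𝕜] F) (Y : Submodule 𝕜 F) : (Yᗮ.map T.adjoint)ᗮ = Y.comap T := by
  ext x
  rw [mem_orthogonal]
  simp only [mem_map, forall_exists_index, and_imp, forall_apply_eq_imp_iff₂,
    LinearMap.adjoint_inner_left, mem_comap]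
  rw [← mem_orthogonal, orthogonal_orthogonal]

end InnerProductSpace

theorem Matrix.mul_vecMulVec_mul_conjTranspose {α m n : Type*} [CommSemiring α] [StarRing α]
    [Fintype m] [Fintype n] (A B : Matrix m n α) (x y : n → α) :
    A * vecMulVec x (star y) * Bᴴ = vecMulVec (A *ᵥ x) (star (B *ᵥ y)) := by
  rw [mul_vecMulVec, vecMulVec_mul, star_mulVec]

theorem Matrix.toEuclideanLin_vecMulVec {𝕜 m n : Type*} [RCLike 𝕜] [Fintype m] [Fintype n]
    [DecidableEq n] (x : EuclideanSpace 𝕜 m) (y : EuclideanSpace 𝕜 n) :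
    toEuclideanLin (vecMulVec x (star y)) = rankOne 𝕜 x y := by
  rw [← symm_toEuclideanLin_rankOne, LinearEquiv.apply_symm_apply]

theorem preimage_superoperator_general (d r : ℕ)
    (F : Fin r → Matrix (Fin d) (Fin d) ℂ)
    (X : Submodule ℂ (EuclideanSpace ℂ (Fin d))) :
    { x : EuclideanSpace ℂ (Fin d) |
        LinearMap.range (Matrix.toEuclideanLin
          (∑ j, F j * Matrix.vecMulVec x (star x) * (F j)ᴴ)) ≤ X } =
      ((⨆ j : Fin r, Submodule.map (Matrix.toEuclideanLin (F j)ᴴ) Xᗮ)ᗮ : Set (EuclideanSpace ℂ (Fin d))) := by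
  ext x
  have hkraus : toEuclideanLin (∑ j, F j * vecMulVec x (star x) * (F j)ᴴ) =
      ∑ j, rankOne ℂ (toEuclideanLin (F j) x) (toEuclideanLin (F j) x) := by
    simp only [mul_vecMulVec_mul_conjTranspose, map_sum, ContinuousLinearMap.toLinearMap_sum]
    exact Finset.sum_congr rfl fun j _ =>
      toEuclideanLin_vecMulVec (toEuclideanLin (F j) x) (toEuclideanLin (F j) x)
  simp only [Set.mem_ofPred_eq, SetLike.mem_coe, hkraus, range_sum_rankOne_self, span_le,
    Set.range_subset_iff, ← iInf_orthogonal, mem_iInf, toEuclideanLin_conjTranspose_eq_adjoint,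
    orthogonal_map_adjoint, mem_comap]

/-- the pre-image of a subspace under a super-operator is the orthogonal
complement of the join of the images of the orthogonal complement under the adjoint
Kraus operators: `ε⁻¹(X) = (⋁_j F_j†(X^⊥))^⊥`. -/
theorem preimage_superoperator (d r : ℕ) (hd : 0 < d)
    (F : Fin r → Matrix (Fin d) (Fin d) ℂ)
    (hF : ∑ j, (F j)ᴴ * F j = 1)
    (X : Submodule ℂ (EuclideanSpace ℂ (Fin d))) :
    { x : EuclideanSpace ℂ (Fin d) |
        LinearMap.range (Matrix.toEuclideanLin
          (∑ j, F j * Matrix.vecMulVec x (star x) * (F j)ᴴ)) ≤ X } =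
      ((⨆ j : Fin r, Submodule.map (Matrix.toEuclideanLin (F j)ᴴ) Xᗮ)ᗮ : Set (EuclideanSpace ℂ (Fin d))) :=
  preimage_superoperator_general d r F X
end
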